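/- arXiv:hep-th/9903206 — 4 statements merged into one kernel-verified Lean document; each statement's English description precedes it below -/
import Mathlib

section
/- Let f'_{abc} (a,b,c ∈ {1,…,r}) be real constants with f'_{abc} = −f'_{bac}, and let t_a, t'_a, s_a, s'_a be N×N complex matrices with t_a^ε := t_a + ε t'_a and s_a^ε := s_a + ε s'_a for ε ∈ {+1,−1}. Then the following are equivalent: (i) for all a,b, [t_a, s_b] − {t'_a, s'_b} = −i Σ_c f'_{cba} s_c and [t_a, s'_b] − {t'_a, s_b} = −i Σ_c f'_{cba} s'_c; (ii) for all a,b, t_a^− s_b^+ − s_b^+ t_a^+ = i Σ_c f'_{bca} s_c^+ and t_a^+ s_b^− − s_b^− t_a^− = i Σ_c f'_{bca} s_c^−. -/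
/-!
Write `X = [t_a, s_b] - {t'_a, s'_b}` and `Y = [t_a, s'_b] - {t'_a, s_b}`. Expanding the chiral
combinations, the left-hand sides of (ii) are exactly `X + Y` and `X - Y`, and after
`f'_{cba} = -f'_{bca}` the right-hand sides of (ii) are the sum and difference of those of (i).
A pair of equations is equivalent to their sum and difference as soon as `2` can be cancelled.
-/

instance Matrix.isAddTorsionFree {m n α : Type*} [AddMonoid α] [IsAddTorsionFree α] :
    IsAddTorsionFree (Matrix m n α) :=
  inferInstanceAs (IsAddTorsionFree (m → n → α))

theorem and_iff_add_and_sub {M : Type*} [AddCommGroup M] [IsAddTorsionFree M] {x y u v : M} :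
    x = u ∧ y = v ↔ x + y = u + v ∧ x - y = u - v := by
  refine ⟨fun ⟨hx, hy⟩ => ⟨by rw [hx, hy], by rw [hx, hy]⟩, fun ⟨hadd, hsub⟩ => ⟨?_, ?_⟩⟩
  · refine (nsmul_right_inj two_ne_zero).1 ?_
    calc 2 • x = (x + y) + (x - y) := by abel
      _ = (u + v) + (u - v) := by rw [hadd, hsub]
      _ = 2 • u := by abel
  · refine (nsmul_right_inj two_ne_zero).1 ?_
    calc 2 • y = (x + y) - (x - y) := by abel
      _ = (u + v) - (u - v) := by rw [hadd, hsub]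
      _ = 2 • v := by abel

section ChiralCommutator

variable {R : Type*} [Ring R] (x x' y y' : R)

theorem chiral_commutator_minus_plus :
    (x - x') * (y + y') - (y + y') * (x + x') =
      ((x * y - y * x) - (x' * y' + y' * x')) + ((x * y' - y' * x) - (x' * y + y * x')) := by
  noncomm_ring

theorem chiral_commutator_plus_minus :
    (x + x') * (y - y') - (y - y') * (x - x') =
      ((x * y - y * x) - (x' * y' + y' * x')) - ((x * y' - y' * x) - (x' * y + y * x')) := by
  noncomm_ring

end ChiralCommutator

/-- The second-order anomaly cancellation condition in the sector `u Φ ψ̄ ψ` is equivalent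
to the tensor-operator property of the chiral scalar couplings `s_a^ε = s_a + ε s'_a`
with respect to the chiral representations `t_a^ε = t_a + ε t'_a`. -/
theorem stmt_6 (r N : ℕ) (f' : Fin r → Fin r → Fin r → ℝ)
    (hanti : ∀ a b c, f' a b c = - f' b a c)
    (t t' s s' : Fin r → Matrix (Fin N) (Fin N) ℂ) :
    ((∀ a b,
        (t a * s b - s b * t a) - (t' a * s' b + s' b * t' a) =
          - Complex.I • ∑ c, ((f' c b a : ℂ) • s c) ∧
        (t a * s' b - s' b * t a) - (t' a * s b + s b * t' a) =
          - Complex.I • ∑ c, ((f' c b a : ℂ) • s' c)) ↔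
     (∀ a b,
        (t a - t' a) * (s b + s' b) - (s b + s' b) * (t a + t' a) =
          Complex.I • ∑ c, ((f' b c a : ℂ) • (s c + s' c)) ∧
        (t a + t' a) * (s b - s' b) - (s b - s' b) * (t a - t' a) =
          Complex.I • ∑ c, ((f' b c a : ℂ) • (s c - s' c)))) := by
  have hswap : ∀ a b (v : Fin r → Matrix (Fin N) (Fin N) ℂ),
      -Complex.I • ∑ c, (f' c b a : ℂ) • v c = Complex.I • ∑ c, (f' b c a : ℂ) • v c := by
    intro a b v
    rw [neg_smul, ← smul_neg, ← Finset.sum_neg_distrib]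
    refine congrArg _ (Finset.sum_congr rfl fun c _ => ?_)
    rw [hanti c b a, Complex.ofReal_neg, neg_smul, neg_neg]
  refine forall₂_congr fun a b => ?_
  rw [hswap, hswap, chiral_commutator_minus_plus, chiral_commutator_plus_minus]
  simp only [smul_add, smul_sub, Finset.sum_add_distrib, Finset.sum_sub_distrib]
  exact and_iff_add_and_sub
end

section
/- Let f_{abc} (a,b,c ∈ {1,…,r}) be totally antisymmetric real constants satisfying the Jacobi identity Σ_c (f_{abc} f_{dec} + f_{bdc} f_{aec} + f_{dac} f_{bec}) = 0 for all a,b,d,e. Then for every m ≥ 1, every u ∈ ℝ^r and every family of vectors A_1,…,A_r ∈ ℝ^m one has Σ_{a,b,c,d,e,g,h} f_{abc} f_{dce} f_{dgh} u_a ⟨A_b, A_g⟩ ⟨A_e, A_h⟩ = 0, where ⟨·,·⟩ is the Euclidean inner product on ℝ^m and all seven indices run over {1,…,r}. -/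
/-! Let `X a` be the matrix `(b, c) ↦ f a b c` and `B` the Gram matrix of the `A b`. The `a`-th
slice of the sum is `-∑ d, tr (X a * X d * B * X d * B)`. Transposing (`(X d)ᵀ = -X d`,
`Bᵀ = B`) and cycling the trace turns this trace sum into `-∑ d, tr (X d * X a * B * X d * B)`,
so twice it is `-∑ d, tr ([X d, X a] * B * X d * B)`. The Jacobi identity reads
`[X d, X a] = ∑ c, f a d c • X c`, so this pairs the coefficients `f a d c`, antisymmetric in
`(d, c)`, with `tr (X c * B * X d * B)`, symmetric in `(c, d)`; such a pairing vanishes. -/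

open Finset Matrix

lemma sum_sum_mul_eq_zero_of_antisymm_of_symm {ι R : Type*} [Fintype ι] [CommRing R]
    [IsAddTorsionFree R] {κ M : ι → ι → R} (hκ : ∀ i j, κ i j = -κ j i)
    (hM : ∀ i j, M i j = M j i) : ∑ i, ∑ j, κ i j * M i j = 0 := by
  rw [← self_eq_neg]
  nth_rw 1 [sum_comm]
  rw [← sum_neg_distrib]
  refine sum_congr rfl fun i _ => ?_
  rw [← sum_neg_distrib]
  refine sum_congr rfl fun j _ => ?_
  rw [hκ j i, hM j i, neg_mul]

section StructureConstants

variable {ι R : Type*} [CommRing R] {f : ι → ι → ι → R}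

def adMatrix (f : ι → ι → ι → R) (a : ι) : Matrix ι ι R := Matrix.of fun b c => f a b c

lemma cyclic_of_antisymm (hanti1 : ∀ a b c, f a b c = -f b a c)
    (hanti2 : ∀ a b c, f a b c = -f a c b) (a b c : ι) : f a b c = f b c a := by
  rw [hanti1, hanti2, neg_neg]

lemma adMatrix_transpose (hanti2 : ∀ a b c, f a b c = -f a c b) (a : ι) :
    (adMatrix f a)ᵀ = -adMatrix f a := by
  ext b c
  simp [adMatrix, hanti2 a c b]

lemma adMatrix_mul_sub_mul [Fintype ι] (hanti1 : ∀ a b c, f a b c = -f b a c)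
    (hanti2 : ∀ a b c, f a b c = -f a c b)
    (hJacobi : ∀ a b d e,
      ∑ c, (f a b c * f d e c + f b d c * f a e c + f d a c * f b e c) = 0)
    (a d : ι) :
    adMatrix f d * adMatrix f a - adMatrix f a * adMatrix f d =
      ∑ c, f a d c • adMatrix f c := by
  ext b e
  simp only [Matrix.sub_apply, mul_apply, Matrix.sum_apply, Matrix.smul_apply, adMatrix,
    of_apply, smul_eq_mul]
  rw [← sub_eq_zero, ← sum_sub_distrib, ← sum_sub_distrib, ← hJacobi a b d e]
  refine sum_congr rfl fun c _ => ?_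
  rw [hanti1 d b c, hanti2 a c e, hanti2 d c e, hanti1 a d c,
    cyclic_of_antisymm hanti1 hanti2 c b e]
  ring

lemma sum_mul_eq_sum_trace_adMatrix [Fintype ι] (f : ι → ι → ι → R) (B : Matrix ι ι R)
    (a : ι) :
    ∑ b, ∑ c, ∑ d, ∑ e, ∑ g, ∑ h, f a b c * f d c e * f d g h * B b g * B e h =
      ∑ d, trace (adMatrix f a * adMatrix f d * (B * adMatrix f d * Bᵀ)ᵀ) := by
  have hfrob : ∀ d, trace (adMatrix f a * adMatrix f d * (B * adMatrix f d * Bᵀ)ᵀ) =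
      ∑ b, ∑ e, (∑ c, f a b c * f d c e) * ∑ h, ∑ g, B b g * f d g h * B e h := by
    intro d
    simp only [trace, Matrix.diag, mul_apply, transpose_apply, adMatrix, of_apply, sum_mul]
  simp only [hfrob, sum_mul]
  simp only [mul_sum]
  conv_rhs => rw [sum_comm]
  refine sum_congr rfl fun b _ => ?_
  conv_lhs => rw [sum_comm]
  refine sum_congr rfl fun d _ => ?_
  conv_lhs => rw [sum_comm]
  refine sum_congr rfl fun e _ => ?_
  refine sum_congr rfl fun c _ => ?_
  conv_lhs => rw [sum_comm]
  refine sum_congr rfl fun h _ => ?_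
  refine sum_congr rfl fun g _ => ?_
  ring

lemma trace_adMatrix_mul_transpose [Fintype ι] (hanti2 : ∀ a b c, f a b c = -f a c b)
    {B : Matrix ι ι R} (hB : Bᵀ = B) (a d : ι) :
    trace (adMatrix f a * adMatrix f d * B * adMatrix f d * B) =
      -trace (adMatrix f d * adMatrix f a * B * adMatrix f d * B) := by
  calc trace (adMatrix f a * adMatrix f d * B * adMatrix f d * B)
      = trace (adMatrix f a * adMatrix f d * B * adMatrix f d * B)ᵀ := (trace_transpose _).symm
    _ = -trace (B * adMatrix f d * B * (adMatrix f d * adMatrix f a)) := by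
      simp only [transpose_mul, hB, adMatrix_transpose hanti2, Matrix.mul_neg, Matrix.neg_mul,
        neg_neg, trace_neg, Matrix.mul_assoc]
    _ = -trace (adMatrix f d * adMatrix f a * B * adMatrix f d * B) := by
      rw [trace_mul_comm]
      simp only [Matrix.mul_assoc]

theorem sum_trace_adMatrix_eq_zero [Fintype ι] [IsAddTorsionFree R]
    (hanti1 : ∀ a b c, f a b c = -f b a c) (hanti2 : ∀ a b c, f a b c = -f a c b)
    (hJacobi : ∀ a b d e,
      ∑ c, (f a b c * f d e c + f b d c * f a e c + f d a c * f b e c) = 0)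
    {B : Matrix ι ι R} (hB : Bᵀ = B) (a : ι) :
    ∑ d, trace (adMatrix f a * adMatrix f d * B * adMatrix f d * B) = 0 := by
  have hsymm : ∀ c d, trace (adMatrix f c * B * adMatrix f d * B) =
      trace (adMatrix f d * B * adMatrix f c * B) := fun c d => by
    rw [Matrix.mul_assoc (_ * B), trace_mul_comm, ← Matrix.mul_assoc]
  have hcomm : ∑ d, trace (adMatrix f d * adMatrix f a * B * adMatrix f d * B) -
      ∑ d, trace (adMatrix f a * adMatrix f d * B * adMatrix f d * B) =
      ∑ d, ∑ c, f a d c * trace (adMatrix f c * B * adMatrix f d * B) := by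
    simp only [← sum_sub_distrib, ← trace_sub, ← Matrix.sub_mul,
      adMatrix_mul_sub_mul hanti1 hanti2 hJacobi, Matrix.sum_mul, trace_sum, Matrix.smul_mul,
      trace_smul, smul_eq_mul]
  have hflip : ∑ d, trace (adMatrix f a * adMatrix f d * B * adMatrix f d * B) =
      -∑ d, trace (adMatrix f d * adMatrix f a * B * adMatrix f d * B) := by
    rw [← sum_neg_distrib]
    exact sum_congr rfl fun d _ => trace_adMatrix_mul_transpose hanti2 hB a d
  rw [sum_sum_mul_eq_zero_of_antisymm_of_symm (hanti2 a) (fun d c => hsymm c d), sub_eq_zero]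
    at hcomm
  rw [← self_eq_neg]
  linear_combination hflip - hcomm

theorem sum_structConst_mul_symm_eq_zero [Fintype ι] [IsAddTorsionFree R]
    (hanti1 : ∀ a b c, f a b c = -f b a c) (hanti2 : ∀ a b c, f a b c = -f a c b)
    (hJacobi : ∀ a b d e,
      ∑ c, (f a b c * f d e c + f b d c * f a e c + f d a c * f b e c) = 0)
    {B : Matrix ι ι R} (hB : Bᵀ = B) (a : ι) :
    ∑ b, ∑ c, ∑ d, ∑ e, ∑ g, ∑ h, f a b c * f d c e * f d g h * B b g * B e h = 0 := by
  rw [sum_mul_eq_sum_trace_adMatrix, ← neg_eq_zero, ← sum_neg_distrib,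
    ← sum_trace_adMatrix_eq_zero hanti1 hanti2 hJacobi hB a]
  refine sum_congr rfl fun d _ => ?_
  simp only [transpose_mul, hB, adMatrix_transpose hanti2, Matrix.mul_neg, Matrix.neg_mul,
    trace_neg, neg_neg, Matrix.mul_assoc]

end StructureConstants

theorem stmt_11_general (r m : ℕ) (f : Fin r → Fin r → Fin r → ℝ)
    (hanti1 : ∀ a b c, f a b c = - f b a c)
    (hanti2 : ∀ a b c, f a b c = - f a c b)
    (hJacobi : ∀ a b d e,
      ∑ c, (f a b c * f d e c + f b d c * f a e c + f d a c * f b e c) = 0)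
    (u : Fin r → ℝ) (A : Fin r → Fin m → ℝ) :
    ∑ a, ∑ b, ∑ c, ∑ d, ∑ e, ∑ g, ∑ h,
      f a b c * f d c e * f d g h * u a *
        (∑ i, A b i * A g i) * (∑ i, A e i * A h i) = 0 := by
  set B := Matrix.of A * (Matrix.of A)ᵀ
  have hgram : ∀ b g, ∑ i, A b i * A g i = B b g := fun _ _ => rfl
  have hB : Bᵀ = B := by rw [transpose_mul, transpose_transpose]
  simp only [hgram]
  refine sum_eq_zero fun a _ => ?_
  rw [← mul_zero (u a), ← sum_structConst_mul_symm_eq_zero hanti1 hanti2 hJacobi hB a]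
  simp only [mul_sum]
  refine sum_congr rfl fun b _ => sum_congr rfl fun c _ => sum_congr rfl fun d _ =>
    sum_congr rfl fun e _ => sum_congr rfl fun g _ => sum_congr rfl fun h _ => by ring

/-- The third-order anomaly term `A_1 = f_{abc} f_{dce} f_{dgh} u_a ⟨A_b,A_g⟩ ⟨A_e,A_h⟩`
vanishes as a consequence of the Jacobi identity for the totally antisymmetric structure
constants `f`. -/
theorem stmt_11 (r m : ℕ) (hm : 1 ≤ m) (f : Fin r → Fin r → Fin r → ℝ)
    (hanti1 : ∀ a b c, f a b c = - f b a c)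
    (hanti2 : ∀ a b c, f a b c = - f a c b)
    (hJacobi : ∀ a b d e,
      ∑ c, (f a b c * f d e c + f b d c * f a e c + f d a c * f b e c) = 0)
    (u : Fin r → ℝ) (A : Fin r → Fin m → ℝ) :
    ∑ a, ∑ b, ∑ c, ∑ d, ∑ e, ∑ g, ∑ h,
      f a b c * f d c e * f d g h * u a *
        (∑ i, A b i * A g i) * (∑ i, A e i * A h i) = 0 :=
  stmt_11_general r m f hanti1 hanti2 hJacobi u A
end

section
/- Fix reals θ with sin θ ≠ 0 and cos θ ≠ 0, reals e, g, g', a 2×2 complex matrix y, and define t_0^+ := −(1/2)(g sin θ σ_3 + g' cos θ I) and t_0^- := −y cos θ. Then the two equalities t_0^+ = e·E_{22} and t_0^- = e·E_{22} (where E_{22} := diag(0,1), i.e. the photon couples vectorially with charge 0 to the neutrino and charge e to the electron) hold if and only if g = e / sin θ, g' = −e / cos θ, and y = (g'/2)(I − σ_3). -/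
open Matrix

def pauli3 : Matrix (Fin 2) (Fin 2) ℂ := !![1, 0; 0, -1]

/-- The matrix unit `E_{22} = diag(0,1)`. -/
def E22 : Matrix (Fin 2) (Fin 2) ℂ := !![0, 0; 0, 1]

/-- In the one-generation Standard Model, the chiral couplings to the photon field have the
usual electromagnetic form `e · diag(0,1)` (charge 0 on the neutrino, `e` on the electron)
iff `g = e / sin θ`, `g' = -e / cos θ`, and `y = (g'/2)(1 - σ_3)`. -/
theorem stmt_14 (θ e g g' : ℝ) (hs : Real.sin θ ≠ 0) (hc : Real.cos θ ≠ 0)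
    (y : Matrix (Fin 2) (Fin 2) ℂ) :
    ((-(1 : ℂ) / 2) •
        (((g * Real.sin θ : ℝ) : ℂ) • pauli3 +
         ((g' * Real.cos θ : ℝ) : ℂ) • (1 : Matrix (Fin 2) (Fin 2) ℂ)) = (e : ℂ) • E22 ∧
     ((-(Real.cos θ) : ℝ) : ℂ) • y = (e : ℂ) • E22) ↔
    (g = e / Real.sin θ ∧ g' = - e / Real.cos θ ∧
     y = ((g' : ℂ) / 2) • ((1 : Matrix (Fin 2) (Fin 2) ℂ) - pauli3)) := by
  have hs' : Complex.sin θ ≠ 0 := by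
    rw [← Complex.ofReal_sin]; exact Complex.ofReal_ne_zero.mpr hs
  have hc' : Complex.cos θ ≠ 0 := by
    rw [← Complex.ofReal_cos]; exact Complex.ofReal_ne_zero.mpr hc
  have hE : (1 : Matrix (Fin 2) (Fin 2) ℂ) - pauli3 = (2:ℂ) • E22 := by
    ext i j; fin_cases i <;> fin_cases j <;> simp [pauli3, E22, Matrix.one_apply] <;> norm_num
  constructor
  · rintro ⟨h1, h2⟩
    have h00 := congrFun (congrFun h1 0) 0
    have h11 := congrFun (congrFun h1 1) 1
    simp [pauli3, E22, Matrix.one_apply] at h00 h11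
    have ha : (g:ℂ) * Complex.sin θ = e := by linear_combination h00/2 + h11
    have hb : (g':ℂ) * Complex.cos θ = -e := by linear_combination h00/2 - h11
    have hg : g = e / Real.sin θ := by
      have h : (g : ℂ) = ((e / Real.sin θ : ℝ) : ℂ) := by
        push_cast; field_simp; linear_combination ha
      exact_mod_cast h
    have hg' : g' = - e / Real.cos θ := by
      have h : (g' : ℂ) = ((- e / Real.cos θ : ℝ) : ℂ) := by
        push_cast; field_simp; linear_combination hb
      exact_mod_cast h
    refine ⟨hg, hg', ?_⟩
    push_cast at h2
    have hy : y = (-Complex.cos θ)⁻¹ • ((e:ℂ) • E22) := by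
      rw [← h2, smul_smul, inv_mul_cancel₀ (neg_ne_zero.mpr hc'), one_smul]
    rw [hy, hE, smul_smul, smul_smul]
    congr 1
    have hgc : (g' : ℂ) = -(e:ℂ) / Complex.cos θ := by rw [hg']; push_cast; ring
    rw [hgc]
    field_simp
  · rintro ⟨hg, hg', hy⟩
    subst hg hg' hy
    constructor <;> ext i j <;> fin_cases i <;> fin_cases j <;>
      simp [pauli3, E22, Matrix.one_apply] <;> push_cast <;> field_simp <;> ring
end

section
/- Fix reals θ with sin θ ≠ 0 and cos θ ≠ 0, g, m_e, and m_1 ≠ 0; set g' := −g sin θ / cos θ, m_2 := m_1, m_3 := m_1/cos θ, y := (g'/2)(I − σ_3), M := diag(0, m_e), and define the 2×2 matrices t_1^+ := (g/2) σ_1, t_2^+ := (g/2) σ_2, t_3^+ := (1/2)(−g cos θ σ_3 + g' sin θ I), t_1^- := 0, t_2^- := 0, t_3^- := y sin θ. For a = 1,2,3 define s_a^+ := (i/m_a)(M t_a^+ − t_a^- M). Then s_1^+ = (i g m_e/(2 m_1)) E_{21}, s_2^+ = −(g m_e/(2 m_1)) E_{21}, s_3^+ = (i g m_e/(2 m_1))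 E_{22}; moreover s_0^+ := (g m_e/(2 m_1)) E_{22}, together with t_0^+ := −(1/2)(g sin θ σ_3 + g' cos θ I) and t_0^- := −y cos θ, satisfies t_a^- s_0^+ − s_0^+ t_a^+ = i Σ_c f'_{0ca} s_c^+ for a = 1, 2, 3, where f'_{011} = f'_{022} = g/2, f'_{033} = g/(2 cos θ), and f'_{0ca} = 0 for all other values of c. -/
open Matrix

def pauli1 : Matrix (Fin 2) (Fin 2) ℂ := !![0, 1; 1, 0]
def pauli2 : Matrix (Fin 2) (Fin 2) ℂ := !![0, -Complex.I; Complex.I, 0]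
def E21 : Matrix (Fin 2) (Fin 2) ℂ := !![0, 0; 1, 0]
set_option maxHeartbeats 1000000 in
/-- In the one-generation Standard Model, the Yukawa coupling matrices
`s_a^+ = (i/m_a)(M t_a^+ - t_a^- M)` take the explicit values
`s_1^+ = (i g m_e/(2m_1)) E_{21}`, `s_2^+ = -(g m_e/(2m_1)) E_{21}`,
`s_3^+ = (i g m_e/(2m_1)) E_{22}`, and `s_0^+ = (g m_e/(2m_1)) E_{22}` satisfies the
tensor-operator (Wigner-Eckart) condition
`t_a^- s_0^+ - s_0^+ t_a^+ = i Σ_c f'_{0ca} s_c^+` for `a = 1,2,3`. -/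
theorem stmt_19 (θ g g' me m1 : ℝ)
    (hs : Real.sin θ ≠ 0) (hc : Real.cos θ ≠ 0) (hm1 : m1 ≠ 0)
    (hg' : g' = - g * Real.sin θ / Real.cos θ)
    -- masses of the heavy bosons
    (m : Fin 4 → ℝ) (hma1 : m 1 = m1) (hma2 : m 2 = m1) (hma3 : m 3 = m1 / Real.cos θ)
    -- the matrix y and the Fermion mass matrix M
    (y M : Matrix (Fin 2) (Fin 2) ℂ)
    (hy : y = ((g' : ℂ) / 2) • ((1 : Matrix (Fin 2) (Fin 2) ℂ) - pauli3))
    (hM : M = !![0, 0; 0, (me : ℂ)])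
    -- the chiral gauge couplings
    (tp tm : Fin 4 → Matrix (Fin 2) (Fin 2) ℂ)
    (htp1 : tp 1 = ((g : ℂ) / 2) • pauli1)
    (htp2 : tp 2 = ((g : ℂ) / 2) • pauli2)
    (htp3 : tp 3 = ((1 : ℂ) / 2) •
      (((-(g * Real.cos θ) : ℝ) : ℂ) • pauli3 +
       ((g' * Real.sin θ : ℝ) : ℂ) • (1 : Matrix (Fin 2) (Fin 2) ℂ)))
    (htp0 : tp 0 = (-(1 : ℂ) / 2) •
      (((g * Real.sin θ : ℝ) : ℂ) • pauli3 +
       ((g' * Real.cos θ : ℝ) : ℂ) • (1 : Matrix (Fin 2) (Fin 2) ℂ)))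
    (htm1 : tm 1 = 0) (htm2 : tm 2 = 0)
    (htm3 : tm 3 = ((Real.sin θ : ℝ) : ℂ) • y)
    (htm0 : tm 0 = ((-(Real.cos θ) : ℝ) : ℂ) • y)
    -- the scalar (Yukawa) couplings
    (sp : Fin 4 → Matrix (Fin 2) (Fin 2) ℂ)
    (hsp : ∀ a : Fin 4, a ≠ 0 →
      sp a = (Complex.I / ((m a : ℝ) : ℂ)) • (M * tp a - tm a * M))
    (hsp0 : sp 0 = ((g * me / (2 * m1) : ℝ) : ℂ) • E22)
    -- the couplings f'_{0ca}
    (f' : Fin 4 → Fin 4 → Fin 4 → ℝ)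
    (hf'011 : f' 0 1 1 = g / 2)
    (hf'022 : f' 0 2 2 = g / 2)
    (hf'033 : f' 0 3 3 = g / (2 * Real.cos θ))
    (hf'z : ∀ c a : Fin 4, a ≠ 0 → c ≠ a → f' 0 c a = 0) :
    sp 1 = (Complex.I * ((g * me / (2 * m1) : ℝ) : ℂ)) • E21 ∧
    sp 2 = (-((g * me / (2 * m1) : ℝ) : ℂ)) • E21 ∧
    sp 3 = (Complex.I * ((g * me / (2 * m1) : ℝ) : ℂ)) • E22 ∧
    (∀ a : Fin 4, a ≠ 0 →
      tm a * sp 0 - sp 0 * tp a = Complex.I • ∑ c, ((f' 0 c a : ℂ) • sp c)) := by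

  subst hg'
  have hc' : Complex.cos θ ≠ 0 := by
    rw [← Complex.ofReal_cos]; exact_mod_cast hc
  have hm1' : (m1 : ℂ) ≠ 0 := by exact_mod_cast hm1
  have hpyth : Complex.sin θ ^ 2 + Complex.cos θ ^ 2 = 1 := Complex.sin_sq_add_cos_sq θ
  have hy2 : y = !![0, 0; 0, ((-g * Real.sin θ / Real.cos θ : ℝ) : ℂ)] := by
    rw [hy]; ext i j
    fin_cases i <;> fin_cases j <;>
      simp [pauli3, Matrix.one_apply, Matrix.smul_apply, Matrix.sub_apply] <;> ring
  have htp3' : tp 3 = !![((-(g * Real.cos θ) : ℝ) + ((-g * Real.sin θ / Real.cos θ * Real.sin θ : ℝ) : ℂ)) / 2, 0;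
      0, (((g * Real.cos θ : ℝ) : ℂ) + ((-g * Real.sin θ / Real.cos θ * Real.sin θ : ℝ) : ℂ)) / 2] := by
    rw [htp3]; ext i j
    fin_cases i <;> fin_cases j <;>
      simp [pauli3, Matrix.one_apply, Matrix.smul_apply, Matrix.add_apply] <;> push_cast <;> ring
  have htm3' : tm 3 = !![0, 0; 0, ((Real.sin θ : ℝ) : ℂ) * ((-g * Real.sin θ / Real.cos θ : ℝ) : ℂ)] := by
    rw [htm3, hy2]; ext i j
    fin_cases i <;> fin_cases j <;> simp [Matrix.smul_apply]
  have hs1 : sp 1 = (Complex.I * ((g * me / (2 * m1) : ℝ) : ℂ)) • E21 := by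
    rw [hsp 1 (by decide), htm1, htp1, hM, hma1]
    ext i j
    fin_cases i <;> fin_cases j <;>
      simp [pauli1, E21, Matrix.mul_apply, Fin.sum_univ_two, Matrix.smul_apply] <;>
      push_cast <;> field_simp [hc', hm1'] <;>
      first
      | ring1
      | linear_combination (2 * (me : ℂ) * g * m1) * Complex.I_sq
  have hs2 : sp 2 = (-((g * me / (2 * m1) : ℝ) : ℂ)) • E21 := by
    rw [hsp 2 (by decide), htm2, htp2, hM, hma2]
    ext i j
    fin_cases i <;> fin_cases j <;>
      simp [pauli2, E21, Matrix.mul_apply, Fin.sum_univ_two, Matrix.smul_apply] <;>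
      push_cast <;> field_simp [hc', hm1'] <;>
      first
      | ring1
      | linear_combination (2 * (me : ℂ) * g * m1) * Complex.I_sq
      | linear_combination ((me : ℂ) * g) * Complex.I_sq
  have hs3 : sp 3 = (Complex.I * ((g * me / (2 * m1) : ℝ) : ℂ)) • E22 := by
    rw [hsp 3 (by decide), htm3', htp3', hM, hma3]
    ext i j
    fin_cases i <;> fin_cases j <;>
      simp [E22, Matrix.mul_apply, Fin.sum_univ_two, Matrix.smul_apply] <;>
      push_cast <;> field_simp [hc', hm1'] <;>
      first
      | ring1
      | linear_combination (Complex.I * g * me * m1 * 2) * hpyth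
      | linear_combination (-(Complex.I * g * me * m1 * 2)) * hpyth
      | linear_combination (Complex.I * me * g * m1 * 2 * Complex.cos θ ^ 2) * hpyth
      | linear_combination ((me : ℂ) * g) * hpyth
  have hA1 : tm 1 * sp 0 - sp 0 * tp 1 = Complex.I • ∑ c, ((f' 0 c 1 : ℂ) • sp c) := by
    rw [htm1, htp1, hsp0, Fin.sum_univ_four, hf'011,
      hf'z 0 1 (by decide) (by decide), hf'z 2 1 (by decide) (by decide),
      hf'z 3 1 (by decide) (by decide), hs1]
    ext i j
    fin_cases i <;> fin_cases j <;>
      simp [pauli1, E21, E22, Matrix.mul_apply, Fin.sum_univ_two, Matrix.smul_apply] <;>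
      push_cast <;> field_simp [hc', hm1'] <;>
      first
      | ring1
      | linear_combination (-((g : ℂ) ^ 2 * me * m1 * 4)) * Complex.I_sq
      | linear_combination ((g : ℂ) ^ 2 * me * m1 * 4) * Complex.I_sq
      | linear_combination (-((g : ℂ) ^ 2 * me)) * Complex.I_sq
  have hA2 : tm 2 * sp 0 - sp 0 * tp 2 = Complex.I • ∑ c, ((f' 0 c 2 : ℂ) • sp c) := by
    rw [htm2, htp2, hsp0, Fin.sum_univ_four, hf'022,
      hf'z 0 2 (by decide) (by decide), hf'z 1 2 (by decide) (by decide),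
      hf'z 3 2 (by decide) (by decide), hs2]
    ext i j
    fin_cases i <;> fin_cases j <;>
      simp [pauli2, E21, E22, Matrix.mul_apply, Fin.sum_univ_two, Matrix.smul_apply] <;>
      push_cast <;> field_simp [hc', hm1'] <;>
      first
      | ring1
      | linear_combination (-((g : ℂ) ^ 2 * me * m1 * 4)) * Complex.I_sq
      | linear_combination ((g : ℂ) ^ 2 * me * m1 * 4) * Complex.I_sq
  have hA3 : tm 3 * sp 0 - sp 0 * tp 3 = Complex.I • ∑ c, ((f' 0 c 3 : ℂ) • sp c) := by
    rw [htm3', htp3', hsp0, Fin.sum_univ_four, hf'033,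
      hf'z 0 3 (by decide) (by decide), hf'z 1 3 (by decide) (by decide),
      hf'z 2 3 (by decide) (by decide), hs3]
    ext i j
    fin_cases i <;> fin_cases j <;>
      simp [E21, E22, Matrix.mul_apply, Fin.sum_univ_two, Matrix.smul_apply] <;>
      push_cast <;> field_simp [hc', hm1'] <;>
      first
      | ring1
      | linear_combination ((g : ℂ) ^ 2 * me * m1 * 2) * hpyth
      | linear_combination (-((g : ℂ) ^ 2 * me * m1 * 2)) * hpyth
      | linear_combination (Complex.I * g ^ 2 * me * m1 * 2) * hpyth
      | linear_combination (-(Complex.I * (g : ℂ) ^ 2 * me * m1 * 2)) * hpyth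
      | linear_combination (-(8 * (g : ℂ) ^ 2 * me * m1 ^ 2 * Complex.cos θ ^ 2)) * hpyth -
          (8 * (g : ℂ) ^ 2 * me * m1 ^ 2 * Complex.cos θ ^ 2) * Complex.I_sq
      | linear_combination (-((g : ℂ) ^ 2 * me)) * hpyth - ((g : ℂ) ^ 2 * me) * Complex.I_sq
  refine ⟨hs1, hs2, hs3, ?_⟩
  intro a ha
  fin_cases a
  · exact absurd rfl ha
  · exact hA1
  · exact hA2
  · exact hA3
end
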